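/- If a graph G is the intersection graph of a Helly circular-arc model, then the clique matrix of G has the circular-ones property. -/

import Mathlib

/-- `S` is an arc of the circle `ℝ/ℤ`. -/
def IsArc (S : Set (AddCircle (1:ℝ))) : Prop :=
  ∃ s l : ℝ, 0 ≤ l ∧ l < 1 ∧
    S = {x | ∃ t : ℝ, 0 ≤ t ∧ t ≤ l ∧ x = (↑s : AddCircle (1:ℝ)) + ↑t}

/-- The intersection graph of a family of arcs. -/
def interGraph {ι : Type*} (A : ι → Set (AddCircle (1:ℝ))) : SimpleGraph ι where
  Adj i j := i ≠ j ∧ (A i ∩ A j).Nonempty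
  symm := by
    constructor
    intro i j h
    exact ⟨h.1.symm, by rw [Set.inter_comm]; exact h.2⟩
  loopless := by
    constructor
    intro i h
    exact h.1 rfl

/-- `S` is a maximal clique of `G`. -/
def IsMaxClique {V : Type*} (G : SimpleGraph V) (S : Set V) : Prop :=
  G.IsClique S ∧ ∀ T : Set V, G.IsClique T → S ⊆ T → T = S

/-- `M` has the circular-ones property. -/
def HasCircularOnes {ρ γ : Type*} (M : ρ → γ → Prop) : Prop :=
  ∃ (n : ℕ) (σ : γ ≃ Fin n), ∀ r, ∃ a l : ℕ,
    ∀ c, M r c ↔ ∃ j < l, (σ c : ℕ) = (a + j) % n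

/-!
Each maximal clique `C` of a Helly model has a point `p C` common to all its arcs, and by
maximality the arcs through `p C` are exactly the members of `C`; in particular distinct
maximal cliques get distinct points. Order the cliques by the position of `p C` in `[0, 1)`.
An arc starting at `c` of length `l` contains `p C` iff `fract (p C - c) ≤ l`, so the cliques
it meets form an initial segment of the order by `fract (p C - c)`, and this order is the
order by position rotated by the number of points below `c`: a cyclic interval.
-/

open Finset Function

section Rank

variable {γ α : Type*} [Fintype γ] [LinearOrder α] (f : γ → α)

def rankOf (C : γ) : ℕ := #{D | f D < f C}

lemma rankOf_lt_card (C : γ) : rankOf f C < Fintype.card γ :=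
  card_lt_univ_of_notMem (x := C) (by simp)

lemma rankOf_lt_rankOf_iff {C D : γ} : rankOf f C < rankOf f D ↔ f C < f D := by
  refine ⟨fun h => lt_of_not_ge fun hDC => h.not_ge <| card_le_card ?_, fun h => card_lt_card ?_⟩
  · exact monotone_filter_right _ fun E _ hE => hE.trans_le hDC
  · refine (ssubset_iff_of_subset ?_).2 ⟨C, by simp [h], by simp⟩
    exact monotone_filter_right _ fun E _ hE => hE.trans h

lemma rankOf_injective (hf : Injective f) : Injective (rankOf f) := fun _ _ h =>
  hf <| le_antisymm (not_lt.1 <| (rankOf_lt_rankOf_iff f).not.1 h.not_gt)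
    (not_lt.1 <| (rankOf_lt_rankOf_iff f).not.1 h.not_lt)

noncomputable def rankEquiv (hf : Injective f) : γ ≃ Fin (Fintype.card γ) :=
  Equiv.ofBijective (fun C => ⟨rankOf f C, rankOf_lt_card f C⟩) <|
    (Fintype.bijective_iff_injective_and_card _).2
      ⟨fun _ _ h => rankOf_injective f hf (Fin.mk.inj_iff.1 h), by simp⟩

@[simp]
lemma rankEquiv_apply_val (hf : Injective f) (C : γ) : (rankEquiv f hf C : ℕ) = rankOf f C := rfl

lemma rankOf_lt_card_filter_le_iff (x : α) (C : γ) :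
    rankOf f C < #{D | f D ≤ x} ↔ f C ≤ x := by
  refine ⟨fun h => le_of_not_gt fun hxC => h.not_ge <| card_le_card ?_, fun h => card_lt_card ?_⟩
  · exact monotone_filter_right _ fun E _ hE => lt_of_le_of_lt hE hxC
  · refine (ssubset_iff_of_subset ?_).2 ⟨C, by simp [h], by simp⟩
    exact monotone_filter_right _ fun E _ hE => (le_of_lt hE).trans h

end Rank

lemma exists_lt_add_mod_eq_add_mod_iff {n a r m : ℕ} (hr : r < n) (hm : m ≤ n) :
    (∃ j < m, (a + r) % n = (a + j) % n) ↔ r < m := by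
  refine ⟨fun ⟨j, hj, h⟩ => ?_, fun h => ⟨r, h, rfl⟩⟩
  rwa [(Nat.ModEq.add_left_cancel' a h).eq_of_lt_of_lt hr (hj.trans_le hm)]

section Rotation

variable {x c : ℝ}

lemma fract_sub_of_le (hx : x < 1) (hc : 0 ≤ c) (h : c ≤ x) : Int.fract (x - c) = x - c :=
  Int.fract_eq_self.2 ⟨by linarith, by linarith⟩

lemma fract_sub_of_lt (hx : 0 ≤ x) (hc : c < 1) (h : x < c) : Int.fract (x - c) = x - c + 1 := by
  rw [← Int.fract_add_one, Int.fract_eq_self.2 ⟨by linarith, by linarith⟩]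

lemma fract_sub_fract (x s : ℝ) : Int.fract (x - Int.fract s) = Int.fract (x - s) := by
  rw [← Int.fract_add_intCast (x - s) ⌊s⌋, ← Int.self_sub_floor s]
  ring_nf

variable {γ : Type*} [Fintype γ] {q : γ → ℝ}

lemma rankOf_eq_card_lt_add_rankOf_fract_sub_mod (hq : ∀ C, q C ∈ Set.Ico 0 1)
    (hc : c ∈ Set.Ico 0 1) (C : γ) :
    rankOf q C = (#{D | q D < c} + rankOf (fun D => Int.fract (q D - c)) C) % Fintype.card γ := by
  classical
  have hle : ∀ D, c ≤ q D → Int.fract (q D - c) = q D - c := fun D h =>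
    fract_sub_of_le (hq D).2 hc.1 h
  have hlt : ∀ D, q D < c → Int.fract (q D - c) = q D - c + 1 := fun D h =>
    fract_sub_of_lt (hq D).1 hc.2 h
  set g := fun D => Int.fract (q D - c)
  rcases le_or_gt c (q C) with hC | hC
  · have hsplit : rankOf q C = #{D | q D < c} + rankOf g C := by
      rw [rankOf, rankOf, ← card_union_of_disjoint, ← filter_or]
      · refine congrArg card (filter_congr fun D _ => ?_)
        simp only [g, hle C hC]
        rcases lt_or_ge (q D) c with hD | hD
        · simp only [hlt D hD, hD, true_or, iff_true]; linarith
        · simp only [hle D hD, not_lt.2 hD, false_or]; constructor <;> intro <;> linarith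
      · refine disjoint_filter.2 fun D _ hD => ?_
        simp only [g, hle C hC, hlt D hD]; linarith [(hq D).1, (hq C).2]
    rw [← hsplit, Nat.mod_eq_of_lt (rankOf_lt_card q C)]
  · have hsplit : rankOf g C = #{D | ¬ q D < c} + rankOf q C := by
      rw [rankOf, rankOf, ← card_union_of_disjoint, ← filter_or]
      · refine congrArg card (filter_congr fun D _ => ?_)
        simp only [g, hlt C hC]
        rcases lt_or_ge (q D) c with hD | hD
        · simp only [hlt D hD, hD, not_true, false_or]; constructor <;> intro <;> linarith
        · simp only [hle D hD, not_lt.2 hD, not_false_eq_true, true_or, iff_true]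
          linarith [(hq D).2, (hq C).1]
      · exact disjoint_filter.2 fun D _ hD hDC => hD (hDC.trans hC)
    rw [hsplit, ← add_assoc, card_filter_add_card_filter_not, card_univ, Nat.add_mod_left,
      Nat.mod_eq_of_lt (rankOf_lt_card q C)]

end Rotation

lemma coe_mem_arc_iff {s l : ℝ} (hl : l < 1) (x : ℝ) :
    (x : AddCircle (1:ℝ)) ∈ {y : AddCircle (1:ℝ) | ∃ t : ℝ, 0 ≤ t ∧ t ≤ l ∧ y = ↑s + ↑t} ↔
      Int.fract (x - s) ≤ l := by
  have key : ∀ t : ℝ, 0 ≤ t → t < 1 →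
      ((x : AddCircle (1:ℝ)) = ↑s + ↑t ↔ Int.fract (x - s) = t) := fun t ht0 ht1 => by
    rw [← AddCircle.coe_eq_coe_iff_of_mem_Ico (a := 0)
      ⟨Int.fract_nonneg _, by simpa using Int.fract_lt_one _⟩ ⟨ht0, by simpa using ht1⟩,
      AddCircle.coe_fract, AddCircle.coe_sub, sub_eq_iff_eq_add']
  constructor
  · rintro ⟨t, ht0, htl, ht⟩
    rwa [(key t ht0 (htl.trans_lt hl)).1 ht]
  · exact fun h => ⟨_, Int.fract_nonneg _, h, (key _ (Int.fract_nonneg _) (Int.fract_lt_one _)).2 rfl⟩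

lemma IsArc.nonempty {S : Set (AddCircle (1:ℝ))} (h : IsArc S) : S.Nonempty := by
  obtain ⟨s, l, hl, -, rfl⟩ := h
  exact ⟨s, 0, le_rfl, hl, by simp⟩

theorem hasCircularOnes_mem_arc {ρ γ : Type*} [Finite γ] {p : γ → AddCircle (1:ℝ)}
    (hp : Injective p) {A : ρ → Set (AddCircle (1:ℝ))} (hA : ∀ r, IsArc (A r)) :
    HasCircularOnes fun r C => p C ∈ A r := by
  classical
  cases nonempty_fintype γ
  choose x hx using fun C => QuotientAddGroup.mk_surjective (p C)
  set q := fun C => Int.fract (x C)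
  have hqp : ∀ C, (q C : AddCircle (1:ℝ)) = p C := fun C => by simp [q, ← hx]
  have hq : ∀ C, q C ∈ Set.Ico 0 1 := fun C => ⟨Int.fract_nonneg _, Int.fract_lt_one _⟩
  have hqinj : Injective q := fun C D h => hp (by rw [← hqp, ← hqp, h])
  refine ⟨_, rankEquiv q hqinj, fun r => ?_⟩
  obtain ⟨s, l, -, hl, hAr⟩ := hA r
  set g := fun D => Int.fract (q D - Int.fract s)
  refine ⟨#{D | q D < Int.fract s}, #{D | g D ≤ l}, fun C => ?_⟩
  show p C ∈ A r ↔ _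
  rw [rankEquiv_apply_val,
    rankOf_eq_card_lt_add_rankOf_fract_sub_mod hq ⟨Int.fract_nonneg _, Int.fract_lt_one _⟩,
    exists_lt_add_mod_eq_add_mod_iff (rankOf_lt_card _ _) (card_filter_le _ _),
    rankOf_lt_card_filter_le_iff, ← hqp, hAr, coe_mem_arc_iff hl, fract_sub_fract]

section Intersection

variable {ι : Type*} {A : ι → Set (AddCircle (1:ℝ))} {C : Set ι} {x : AddCircle (1:ℝ)}

lemma isClique_interGraph_of_forall_mem (hx : ∀ i ∈ C, x ∈ A i) : (interGraph A).IsClique C :=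
  fun i hi j hj hij => ⟨hij, x, hx i hi, hx j hj⟩

lemma IsMaxClique.inter_nonempty (hC : IsMaxClique (interGraph A) C) (hA : ∀ i, (A i).Nonempty) :
    ∀ i ∈ C, ∀ j ∈ C, (A i ∩ A j).Nonempty := by
  intro i hi j hj
  rcases eq_or_ne i j with rfl | hij
  · simpa using hA i
  · exact (hC.1 hi hj hij).2

lemma IsMaxClique.mem_iff_of_forall_mem (hC : IsMaxClique (interGraph A) C)
    (hx : ∀ i ∈ C, x ∈ A i) (i : ι) : i ∈ C ↔ x ∈ A i := by
  refine ⟨hx i, fun hi => ?_⟩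
  have hclique := isClique_interGraph_of_forall_mem (Set.forall_mem_insert.2 ⟨hi, hx⟩)
  exact hC.2 _ hclique (Set.subset_insert i C) ▸ Set.mem_insert i C

end Intersection

/-- If `G` is the intersection graph of a Helly circular-arc model, then the
clique matrix of `G` (rows: vertices, columns: maximal cliques) has the
circular-ones property. -/
theorem helly_circular_arc_clique_matrix_circularOnes {ι : Type*} [Fintype ι]
    (A : ι → Set (AddCircle (1:ℝ))) (harc : ∀ i, IsArc (A i))
    (hHelly : ∀ s : Set ι, (∀ i ∈ s, ∀ j ∈ s, (A i ∩ A j).Nonempty) →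
      ∃ p, ∀ i ∈ s, p ∈ A i) :
    HasCircularOnes
      (fun (i : ι) (C : {S : Set ι // IsMaxClique (interGraph A) S}) => i ∈ C.1) := by
  choose p hp using fun C : {S : Set ι // IsMaxClique (interGraph A) S} =>
    hHelly C.1 (C.2.inter_nonempty fun i => (harc i).nonempty)
  have hmem : ∀ i C, i ∈ C.1 ↔ p C ∈ A i := fun i C => C.2.mem_iff_of_forall_mem (hp C) i
  have hinj : Injective p := fun C D h => Subtype.ext <| Set.ext fun i => by rw [hmem, hmem, h]
  simpa only [hmem] using hasCircularOnes_mem_arc hinj harc
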